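/- The third characteristic field of the liquid–gas model is genuinely nonlinear: with λ₃(m,n,u) = u + √(kγ(m+n)^{γ−1}) and eigenvector r₃ = (m, n, √(kγ(m+n)^{γ−1})), one has ∇λ₃ · r₃ = ((γ+1)/2)·√(kγ(m+n)^{γ−1}) > 0 for all m, n > 0. -/

import Mathlib

open Real

/-!
For `t = m + n > 0` the sound speed `c(t) = √(kγ t^{γ-1})` is homogeneous of degree `(γ-1)/2`,
so Euler's relation gives `t c'(t) = ((γ-1)/2) c(t)`. Since `λ₃ = u + c(m+n)` and
`r₃ = (m, n, c)`, the directional derivative is `c + (m+n) c'(m+n) = ((γ+1)/2) c`.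
-/

theorem hasDerivAt_sqrt_mul_rpow {a p t : ℝ} (ha : 0 < a) (ht : 0 < t) :
    HasDerivAt (fun s => √(a * s ^ p)) (p / 2 * √(a * t ^ p) / t) t := by
  have hpos : 0 < a * t ^ p := by positivity
  convert ((hasDerivAt_rpow_const (p := p) (Or.inl ht.ne')).const_mul a).sqrt hpos.ne' using 1
  have hsq : √(a * t ^ p) ^ 2 = a * t ^ p := sq_sqrt hpos.le
  rw [rpow_sub_one ht.ne']
  field_simp
  rw [hsq]
  ring

theorem fderiv_snd_snd_add_comp_fst_add_fst_snd_apply {f : ℝ → ℝ} {f' : ℝ} {w : ℝ × ℝ × ℝ}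
    (hf : HasDerivAt f f' (w.1 + w.2.1)) (v : ℝ × ℝ × ℝ) :
    fderiv ℝ (fun w : ℝ × ℝ × ℝ => w.2.2 + f (w.1 + w.2.1)) w v = v.2.2 + f' * (v.1 + v.2.1) := by
  have hsnd : HasFDerivAt (Prod.snd : ℝ × ℝ × ℝ → ℝ × ℝ) (ContinuousLinearMap.snd ℝ ℝ (ℝ × ℝ)) w :=
    hasFDerivAt_snd
  have hder : HasFDerivAt (fun w : ℝ × ℝ × ℝ => w.2.2 + f (w.1 + w.2.1)) _ w :=
    hsnd.snd.add (hf.comp_hasFDerivAt w (hasFDerivAt_fst.add hsnd.fst))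
  rw [hder.fderiv]
  simp [mul_add]

/-- Genuine nonlinearity of the third field: with
`λ₃(m,n,u) = u + √(kγ(m+n)^{γ−1})` and `r₃ = (m, n, √(kγ(m+n)^{γ−1}))`,
one has `∇λ₃ · r₃ = ((γ+1)/2)·√(kγ(m+n)^{γ−1}) > 0` for `m, n > 0`. -/
theorem third_field_genuinely_nonlinear (k γ : ℝ) (hk : 0 < k) (hγ : 1 < γ)
    (lam₃ : ℝ × ℝ × ℝ → ℝ)
    (hlam : ∀ w : ℝ × ℝ × ℝ,
      lam₃ w = w.2.2 + Real.sqrt (k * γ * (w.1 + w.2.1) ^ (γ - 1))) :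
    ∀ m n u : ℝ, 0 < m → 0 < n →
      fderiv ℝ lam₃ (m, n, u)
          (m, n, Real.sqrt (k * γ * (m + n) ^ (γ - 1)))
        = ((γ + 1) / 2) * Real.sqrt (k * γ * (m + n) ^ (γ - 1)) ∧
      0 < ((γ + 1) / 2) * Real.sqrt (k * γ * (m + n) ^ (γ - 1)) := by
  intro m n u hm hn
  have hkγ : 0 < k * γ := mul_pos hk (by linarith)
  have ht : 0 < m + n := add_pos hm hn
  obtain rfl : lam₃ = fun w => w.2.2 + √(k * γ * (w.1 + w.2.1) ^ (γ - 1)) := funext hlam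
  refine ⟨?_, mul_pos (by linarith) (sqrt_pos.2 (by positivity))⟩
  rw [fderiv_snd_snd_add_comp_fst_add_fst_snd_apply (hasDerivAt_sqrt_mul_rpow hkγ ht)]
  field_simp
  ring
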